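/- arXiv:1404.5928 — 4 statements merged into one kernel-verified Lean document; each statement's English description precedes it below -/
import Mathlib

section
/- Let Z be a locally convex space and C ⊆ Z a convex cone with 0 ∈ C and cl C ≠ Z. The partial order ⊇ is total on F(Z,C) = {A ⊆ Z | A = cl(A+C)} if and only if cl C is a closed half-space H⁺(z*) = {z ∈ Z | z*(z) ≥ 0} for some nonzero continuous linear functional z* in the positive dual cone of C. -/
open Set
open scoped Pointwise

/-!
Write `K = cl C`. The sets with `A = cl (A + C)` are exactly the closed sets with `A + K ⊆ A`,
so totality of inclusion on them depends on `K` alone. If `K = {w ≥ 0}`, these sets are upward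
closed for the preorder induced by `w`, hence nested. Conversely, comparing `K` with `z + K`
gives `z ∈ K` or `-z ∈ K` for every `z`; then the complement of `K` is an open convex set
missing `0`, and a Hahn–Banach functional separating it from `0` has `K` as its half-space.
-/

theorem Convex.add_mem_of_smul_mem {𝕜 E : Type*} [Field 𝕜] [LinearOrder 𝕜] [IsStrictOrderedRing 𝕜]
    [AddCommGroup E] [Module 𝕜 E] {s : Set E} (hs : Convex 𝕜 s)
    (hsmul : ∀ t : 𝕜, 0 < t → ∀ z ∈ s, t • z ∈ s) {x y : E} (hx : x ∈ s) (hy : y ∈ s) :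
    x + y ∈ s := by
  have hmid : (2⁻¹ : 𝕜) • x + (2⁻¹ : 𝕜) • y ∈ s :=
    hs hx hy (by positivity) (by positivity) (by norm_num)
  simpa [smul_add, smul_smul] using hsmul 2 two_pos _ hmid

section ContinuousAdd

variable {Z : Type*} [AddCommGroup Z] [TopologicalSpace Z] [ContinuousAdd Z]

theorem eq_closure_add_iff {A C : Set Z} (h0 : (0 : Z) ∈ C) :
    A = closure (A + C) ↔ IsClosed A ∧ A + closure C ⊆ A := by
  constructor
  · intro hA
    refine ⟨hA ▸ isClosed_closure, ?_⟩
    calc A + closure C ⊆ closure A + closure C := add_subset_add_right subset_closure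
      _ ⊆ closure (A + C) := vadd_set_closure_subset A C
      _ = A := hA.symm
  · rintro ⟨hA, hAC⟩
    refine subset_antisymm ((subset_add_left A h0).trans subset_closure) (closure_minimal ?_ hA)
    exact (add_subset_add_left subset_closure).trans hAC

theorem AddSubmonoid.mem_or_neg_mem_of_total (K : AddSubmonoid Z) (hK : IsClosed (K : Set Z))
    (htot : ∀ A B : Set Z, IsClosed A ∧ A + K ⊆ A → IsClosed B ∧ B + K ⊆ B → A ⊆ B ∨ B ⊆ A)
    (z : Z) : z ∈ K ∨ -z ∈ K := by
  have hKK : (K : Set Z) + K ⊆ K := Set.add_subset_iff.2 fun _ hx _ hy ↦ K.add_mem hx hy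
  have hzK : IsClosed ({z} + (K : Set Z)) ∧ {z} + (K : Set Z) + K ⊆ {z} + K := by
    refine ⟨?_, by rw [add_assoc]; exact add_subset_add_left hKK⟩
    rw [singleton_add]
    exact (Homeomorph.addLeft z).isClosedMap _ hK
  rcases htot _ _ hzK ⟨hK, hKK⟩ with h | h
  · left
    simpa using h (add_mem_add (mem_singleton z) K.zero_mem)
  · right
    obtain ⟨_, rfl, k, hk, hzk⟩ := h K.zero_mem
    exact neg_eq_of_add_eq_zero_right hzk ▸ hk

end ContinuousAdd

theorem mem_of_add_setOf_nonneg_subset {Z Γ F : Type*} [AddCommGroup Z] [AddCommGroup Γ]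
    [LinearOrder Γ] [IsOrderedAddMonoid Γ] [FunLike F Z Γ] [AddMonoidHomClass F Z Γ] {w : F}
    {A : Set Z} (hA : A + {z | 0 ≤ w z} ⊆ A) {x y : Z} (hx : x ∈ A) (hxy : w x ≤ w y) : y ∈ A := by
  have : x + (y - x) ∈ A := hA (add_mem_add hx (by simpa [map_sub] using hxy))
  rwa [add_sub_cancel] at this

theorem subset_or_subset_of_add_setOf_nonneg_subset {Z Γ F : Type*} [AddCommGroup Z]
    [AddCommGroup Γ] [LinearOrder Γ] [IsOrderedAddMonoid Γ] [FunLike F Z Γ]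
    [AddMonoidHomClass F Z Γ] {w : F} {A B : Set Z} (hA : A + {z | 0 ≤ w z} ⊆ A)
    (hB : B + {z | 0 ≤ w z} ⊆ B) : A ⊆ B ∨ B ⊆ A := by
  refine or_iff_not_imp_left.2 fun hAB b hb ↦ ?_
  obtain ⟨a, ha, haB⟩ := not_subset.1 hAB
  have hab : w a < w b := lt_of_not_ge fun hba ↦ haB (mem_of_add_setOf_nonneg_subset hB hb hba)
  exact mem_of_add_setOf_nonneg_subset hA ha hab.le

namespace PointedCone

variable {𝕜 E : Type*} [Field 𝕜] [LinearOrder 𝕜] [IsStrictOrderedRing 𝕜] [AddCommGroup E]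
  [Module 𝕜 E]

theorem convex_compl_of_mem_or_neg_mem (K : PointedCone 𝕜 E) (htot : ∀ z, z ∈ K ∨ -z ∈ K) :
    Convex 𝕜 (K : Set E)ᶜ := by
  intro x hx y hy a b ha hb hab hxy
  rcases ha.eq_or_lt with rfl | ha
  · rw [zero_add] at hab
    subst hab
    exact hy (by simpa using hxy)
  · have hnegy : -y ∈ K := (htot y).resolve_left hy
    have hax : a • x ∈ K := by simpa using K.add_mem hxy (K.smul_mem hb hnegy)
    exact hx ((K.smul_mem_iff ha).1 hax)

theorem coe_eq_setOf_nonneg_of_forall_notMem (K : PointedCone 𝕜 E) (w : E →ₗ[𝕜] 𝕜)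
    (hw : ∀ a ∉ K, w a < 0) (hne : (K : Set E) ≠ univ) : (K : Set E) = {z | 0 ≤ w z} := by
  have hsub : {z | 0 ≤ w z} ⊆ (K : Set E) := fun z hz ↦ by_contra fun h ↦ (hw z h).not_ge hz
  refine subset_antisymm (fun z hz ↦ le_of_not_gt fun hwz ↦ ?_) hsub
  obtain ⟨a, ha⟩ := nonempty_compl.2 hne
  -- `a = (a - t • z) + t • z` with both summands in `K`, where `t` makes `w (a - t • z) = 0`.
  have hwa := hw a ha
  set t := w a / w z
  have ht : 0 < t := div_pos_of_neg_of_neg hwa hwz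
  have hrest : a - t • z ∈ K := hsub (by simp [t, div_mul_cancel₀ _ hwz.ne])
  exact ha (by simpa using K.add_mem hrest (K.smul_mem ht.le hz))

theorem exists_coe_eq_setOf_nonneg {Z : Type*} [AddCommGroup Z] [Module ℝ Z] [TopologicalSpace Z]
    [IsTopologicalAddGroup Z] [ContinuousSMul ℝ Z] [LocallyConvexSpace ℝ Z] (K : PointedCone ℝ Z)
    (hK : IsClosed (K : Set Z)) (hne : (K : Set Z) ≠ univ) (htot : ∀ z, z ∈ K ∨ -z ∈ K) :
    ∃ w : Z →L[ℝ] ℝ, (K : Set Z) = {z | 0 ≤ w z} := by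
  obtain ⟨w, hw⟩ := geometric_hahn_banach_open_point (K.convex_compl_of_mem_or_neg_mem htot)
    hK.isOpen_compl (not_not.2 K.zero_mem)
  exact ⟨w, K.coe_eq_setOf_nonneg_of_forall_notMem w (fun a ha ↦ by simpa using hw a ha) hne⟩

end PointedCone

theorem stmt7 {Z : Type*} [AddCommGroup Z] [Module ℝ Z] [TopologicalSpace Z]
    [IsTopologicalAddGroup Z] [ContinuousSMul ℝ Z] [LocallyConvexSpace ℝ Z]
    (C : Set Z) (hConv : Convex ℝ C)
    (hCone : ∀ t : ℝ, 0 < t → ∀ z ∈ C, t • z ∈ C) (h0 : (0 : Z) ∈ C)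
    (hne : closure C ≠ Set.univ) :
    (∀ A B : Set Z, A = closure (A + C) → B = closure (B + C) → A ⊆ B ∨ B ⊆ A) ↔
      ∃ w : Z →L[ℝ] ℝ, w ≠ 0 ∧ (∀ z ∈ C, 0 ≤ w z) ∧ closure C = {z : Z | 0 ≤ w z} := by
  let K : PointedCone ℝ Z :=
    (ConvexCone.toPointedCone ⟨C, hCone, fun _ hx _ hy ↦ hConv.add_mem_of_smul_mem hCone hx hy⟩
      h0).closure
  simp only [eq_closure_add_iff h0]
  constructor
  · intro htot
    obtain ⟨w, hw⟩ := K.exists_coe_eq_setOf_nonneg isClosed_closure hne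
      (K.toAddSubmonoid.mem_or_neg_mem_of_total isClosed_closure htot)
    refine ⟨w, ?_, fun z hz ↦ (hw ▸ subset_closure hz : z ∈ {z | 0 ≤ w z}), hw⟩
    rintro rfl
    exact hne (hw.trans (by ext; simp))
  · rintro ⟨w, -, -, hK⟩ A B hA hB
    rw [hK] at hA hB
    exact subset_or_subset_of_add_setOf_nonneg_subset hA.2 hB.2
end

section
/- Let f map X into F(Z,C), be level-closed (i.e. {x | z ∈ f(x)} is closed for each z ∈ Z), and have compact domain dom f = {x | f(x) ≠ ∅}. Then the image family f[X] satisfies the domination property: for every A ∈ f[X] there exists a ⊇-minimal element Ā of f[X] with Ā ⊇ A. -/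
open Set
open scoped Pointwise

/-! Order `f[X]` by inclusion and apply Zorn's lemma. An upper bound of a chain `c` of
nonempty values is a value `f x̄` with `x̄` in every superlevel set `{x | B ⊆ f x}`,
`B ∈ c`: these sets are closed by level-closedness, compact since they lie in
`dom f`, and directed because `c` is a chain, so they have a common point. -/

section LevelClosed

variable {X Z : Type*} [TopologicalSpace X] {f : X → Set Z}

theorem isClosed_setOf_subset_apply (hlevel : ∀ z : Z, IsClosed {x : X | z ∈ f x})
    (B : Set Z) : IsClosed {x | B ⊆ f x} := by
  have hB : {x | B ⊆ f x} = ⋂ z ∈ B, {x | z ∈ f x} := by ext; simp [subset_def]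
  exact hB ▸ isClosed_biInter fun z _ => hlevel z

theorem isCompact_setOf_subset_apply (hlevel : ∀ z : Z, IsClosed {x : X | z ∈ f x})
    (hdom : IsCompact {x : X | (f x).Nonempty}) {B : Set Z} (hB : B.Nonempty) :
    IsCompact {x | B ⊆ f x} :=
  hdom.of_isClosed_subset (isClosed_setOf_subset_apply hlevel B) fun _ hx => hB.mono hx

theorem exists_forall_subset_apply_of_isChain (hlevel : ∀ z : Z, IsClosed {x : X | z ∈ f x})
    (hdom : IsCompact {x : X | (f x).Nonempty}) {c : Set (Set Z)} (hc : c ⊆ range f)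
    (hchain : IsChain (· ⊆ ·) c) (hne : c.Nonempty) : ∃ x, ∀ B ∈ c, B ⊆ f x := by
  obtain ⟨B₁, hB₁, hB₁ne⟩ | hempty := em (∃ B ∈ c, B.Nonempty)
  swap
  · obtain ⟨x, -⟩ := hc hne.some_mem
    refine ⟨x, fun B hB => ?_⟩
    rw [not_nonempty_iff_eq_empty.1 fun h => hempty ⟨B, hB, h⟩]
    exact empty_subset _
  set T : Set (Set X) := (fun B => {x | B ⊆ f x}) '' {B ∈ c | B.Nonempty}
  have : Nonempty T := ⟨⟨_, B₁, ⟨hB₁, hB₁ne⟩, rfl⟩⟩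
  have hTdir : DirectedOn (· ⊇ ·) T :=
    ((hchain.mono (sep_subset _ _)).image_of_map_rel _ _ _
      fun _ _ hBB' _ hx => Subset.trans hBB' hx).directedOn
  obtain ⟨x, hx⟩ := IsCompact.nonempty_sInter_of_directed_nonempty_isCompact_isClosed hTdir
    (by
      rintro _ ⟨B, ⟨hBc, -⟩, rfl⟩
      obtain ⟨x, rfl⟩ := hc hBc
      exact ⟨x, show f x ⊆ f x from subset_rfl⟩)
    (by rintro _ ⟨B, ⟨-, hB⟩, rfl⟩; exact isCompact_setOf_subset_apply hlevel hdom hB)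
    (by rintro _ ⟨B, -, rfl⟩; exact isClosed_setOf_subset_apply hlevel B)
  refine ⟨x, fun B hB => ?_⟩
  rcases B.eq_empty_or_nonempty with rfl | hBne
  · exact empty_subset _
  · exact hx _ ⟨B, ⟨hB, hBne⟩, rfl⟩

end LevelClosed

theorem stmt8_general {X Z : Type*} [TopologicalSpace X]
    (f : X → Set Z)
    (hlevel : ∀ z : Z, IsClosed {x : X | z ∈ f x})
    (hdom : IsCompact {x : X | (f x).Nonempty}) :
    ∀ A ∈ Set.range f, ∃ Abar ∈ Set.range f, A ⊆ Abar ∧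
      ∀ A' ∈ Set.range f, Abar ⊆ A' → A' = Abar := by
  intro A hA
  obtain ⟨Abar, hAAbar, hmax⟩ := zorn_subset_nonempty {B | B ∈ range f ∧ A ⊆ B}
    (fun c hcS hchain hne => by
      obtain ⟨x, hx⟩ := exists_forall_subset_apply_of_isChain hlevel hdom
        (fun B hB => (hcS hB).1) hchain hne
      exact ⟨f x, ⟨⟨x, rfl⟩, (hcS hne.some_mem).2.trans (hx _ hne.some_mem)⟩, hx⟩)
    A ⟨hA, subset_rfl⟩
  exact ⟨Abar, hmax.prop.1, hAAbar, fun A' hA' hsub =>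
    (hmax.eq_of_subset ⟨hA', hAAbar.trans hsub⟩ hsub).symm⟩

/-- Weierstraß-type domination property: a level-closed `F(Z,C)`-valued
function with compact domain has the domination property on its image. -/
theorem stmt8 {X Z : Type*} [TopologicalSpace X] [AddCommGroup Z] [Module ℝ Z]
    [TopologicalSpace Z] (C : Set Z) (hConv : Convex ℝ C)
    (hCone : ∀ t : ℝ, 0 < t → ∀ z ∈ C, t • z ∈ C) (h0 : (0 : Z) ∈ C)
    (f : X → Set Z) (hf : ∀ x, f x = closure (f x + C))
    (hlevel : ∀ z : Z, IsClosed {x : X | z ∈ f x})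
    (hdom : IsCompact {x : X | (f x).Nonempty}) :
    ∀ A ∈ Set.range f, ∃ Abar ∈ Set.range f, A ⊆ Abar ∧
      ∀ A' ∈ Set.range f, Abar ⊆ A' → A' = Abar :=
  stmt8_general f hlevel hdom
end

section
/- For A, B ∈ G(Z,C) the inf-residuation has the dual representation A ∸ B = ⋂_{z*∈C⁺\{0}} {z ∈ Z | σ△_A(z*) ∸ σ△_B(z*) ≤ z*(z)}, where on the extended reals r ∸ s = inf{t ∈ ℝ | r ≤ s + t} (inf-addition conventions). -/
/-!
Extended-real subtraction is already the inf-residuation of the statement, so the right-hand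
side says `σ△_A(z*) ≤ σ△_B(z*) + z*(z)` for all nonzero `z* ∈ C⁺`. This is necessary because
`B + z ⊆ A`. Conversely, if `b + z ∉ A` for some `b ∈ B`, strict separation of `b + z` from the
closed convex set `A` gives `z*` with `z*(b + z) < σ△_A(z*)`; since `A + C ⊆ A`, the functional `z*`
is bounded below on every ray of `C` starting in `A`, hence lies in `C⁺`. For `A = ∅` any nonzero
`z* ∈ C⁺` works, as `σ△_∅ = +∞`.
-/

open Set
open scoped Pointwise

namespace EReal

lemma sInf_coe_ge (e : EReal) : sInf {x : EReal | ∃ t : ℝ, x = t ∧ e ≤ t} = e :=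
  le_antisymm (le_of_forall_lt_iff_le.mp fun t ht => sInf_le ⟨t, rfl, ht.le⟩)
    (le_sInf fun _ ⟨_, hx, ht⟩ => hx ▸ ht)

lemma sInf_coe_le_add_eq_sub (r s : EReal) :
    sInf {x : EReal | ∃ t : ℝ, x = t ∧ r ≤ s + t} = r - s := by
  simp_rw [add_comm s, ← sub_le_iff_le_add (.inr (coe_ne_top _)) (.inr (coe_ne_bot _))]
  exact sInf_coe_ge (r - s)

end EReal

section InfSupport

variable {Z : Type*} [AddCommGroup Z] [Module ℝ Z] [TopologicalSpace Z]

/-- The paper's `σ△_A(w)`; it is `⊤` for `A = ∅`. -/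
noncomputable def infSupport (A : Set Z) (w : Z →L[ℝ] ℝ) : EReal := ⨅ a ∈ A, (w a : EReal)

lemma infSupport_le {A : Set Z} {a : Z} (ha : a ∈ A) (w : Z →L[ℝ] ℝ) :
    infSupport A w ≤ w a :=
  iInf₂_le a ha

lemma infSupport_le_infSupport_add {A B : Set Z} {z : Z} (hz : ∀ b ∈ B, b + z ∈ A)
    (w : Z →L[ℝ] ℝ) : infSupport A w ≤ infSupport B w + w z := by
  rw [← EReal.sub_le_iff_le_add (.inl (EReal.coe_ne_bot _)) (.inl (EReal.coe_ne_top _))]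
  refine le_iInf₂ fun b hb => ?_
  rw [EReal.sub_le_iff_le_add (.inl (EReal.coe_ne_bot _)) (.inl (EReal.coe_ne_top _)),
    ← EReal.coe_add, ← map_add]
  exact infSupport_le (hz b hb) w

lemma nonneg_of_forall_le_of_add_subset {A C : Set Z} {f : Z →L[ℝ] ℝ} {u : ℝ}
    (hCone : ∀ t : ℝ, 0 < t → ∀ z ∈ C, t • z ∈ C) (hAC : A + C ⊆ A) (hA : A.Nonempty)
    (hf : ∀ a ∈ A, u ≤ f a) : ∀ c ∈ C, 0 ≤ f c := by
  obtain ⟨a, ha⟩ := hA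
  intro c hc
  by_contra! hfc
  set t := (f a - u + 1) / -f c
  have ht : 0 < t := div_pos (by linarith [hf a ha]) (neg_pos.mpr hfc)
  have hray : f (a + t • c) = u - 1 := by
    simp only [map_add, map_smul, smul_eq_mul, t]
    field_simp [hfc.ne]
    ring
  linarith [hf _ (hAC (add_mem_add ha (hCone t ht c hc)))]

variable [IsTopologicalAddGroup Z] [ContinuousSMul ℝ Z] [LocallyConvexSpace ℝ Z]

lemma exists_dual_lt_infSupport {A C : Set Z} (hCone : ∀ t : ℝ, 0 < t → ∀ z ∈ C, t • z ∈ C)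
    (hdual : ∃ w : Z →L[ℝ] ℝ, w ≠ 0 ∧ ∀ z ∈ C, 0 ≤ w z)
    (hAconv : Convex ℝ A) (hAclosed : IsClosed A) (hAC : A + C ⊆ A) {x : Z} (hx : x ∉ A) :
    ∃ w : Z →L[ℝ] ℝ, (w ≠ 0 ∧ ∀ z ∈ C, 0 ≤ w z) ∧ (w x : EReal) < infSupport A w := by
  rcases A.eq_empty_or_nonempty with rfl | hA
  · obtain ⟨w, hw⟩ := hdual
    exact ⟨w, hw, by simp [infSupport]⟩
  obtain ⟨f, u, hfx, hf⟩ := geometric_hahn_banach_point_closed hAconv hAclosed hx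
  obtain ⟨a, ha⟩ := hA
  have hf0 : f ≠ 0 := fun h => by simpa [h] using hfx.trans (hf a ha)
  have hfC := nonneg_of_forall_le_of_add_subset hCone hAC ⟨a, ha⟩ fun a ha => (hf a ha).le
  refine ⟨f, ⟨hf0, hfC⟩, (EReal.coe_lt_coe_iff.mpr hfx).trans_le ?_⟩
  exact le_iInf₂ fun a ha => EReal.coe_le_coe_iff.mpr (hf a ha).le

end InfSupport

theorem stmt17_general {Z : Type*} [AddCommGroup Z] [Module ℝ Z] [TopologicalSpace Z]
    [IsTopologicalAddGroup Z] [ContinuousSMul ℝ Z] [LocallyConvexSpace ℝ Z]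
    (C : Set Z)
    (hCone : ∀ t : ℝ, 0 < t → ∀ z ∈ C, t • z ∈ C)
    (hdual : ∃ w : Z →L[ℝ] ℝ, w ≠ 0 ∧ ∀ z ∈ C, 0 ≤ w z)
    (A B : Set Z) (hA : A = closure (convexHull ℝ (A + C))) :
    {z : Z | ∀ b ∈ B, b + z ∈ A}
      = ⋂ w ∈ {w : Z →L[ℝ] ℝ | w ≠ 0 ∧ ∀ z ∈ C, 0 ≤ w z},
          {z : Z | sInf {x : EReal | ∃ t : ℝ, x = (t : EReal) ∧
              (⨅ a ∈ A, (w a : EReal)) ≤ (⨅ b ∈ B, (w b : EReal)) + (t : EReal)}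
            ≤ (w z : EReal)} := by
  have hAconv : Convex ℝ A := hA ▸ (convex_convexHull ℝ _).closure
  have hAclosed : IsClosed A := hA ▸ isClosed_closure
  have hAC : A + C ⊆ A := ((subset_convexHull ℝ _).trans subset_closure).trans hA.symm.subset
  ext z
  simp only [EReal.sInf_coe_le_add_eq_sub, mem_ofPred_eq, mem_iInter,
    EReal.sub_le_iff_le_add (.inr (EReal.coe_ne_top _)) (.inr (EReal.coe_ne_bot _))]
  refine ⟨fun hz w _ => (infSupport_le_infSupport_add hz w).trans_eq (add_comm _ _),
    fun hz b hb => ?_⟩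
  by_contra hbz
  obtain ⟨w, hw, hlt⟩ := exists_dual_lt_infSupport hCone hdual hAconv hAclosed hAC hbz
  have hle : infSupport B w + w z ≤ w (b + z) := by
    rw [map_add, EReal.coe_add]
    exact add_le_add_left (infSupport_le hb w) _
  exact (hlt.trans_le (((hz w hw).trans_eq (add_comm _ _)).trans hle)).false

theorem stmt17 {Z : Type*} [AddCommGroup Z] [Module ℝ Z] [TopologicalSpace Z]
    [IsTopologicalAddGroup Z] [ContinuousSMul ℝ Z] [LocallyConvexSpace ℝ Z]
    (C : Set Z) (hConv : Convex ℝ C)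
    (hCone : ∀ t : ℝ, 0 < t → ∀ z ∈ C, t • z ∈ C) (h0 : (0 : Z) ∈ C)
    (hdual : ∃ w : Z →L[ℝ] ℝ, w ≠ 0 ∧ ∀ z ∈ C, 0 ≤ w z)
    (A B : Set Z) (hA : A = closure (convexHull ℝ (A + C)))
    (hB : B = closure (convexHull ℝ (B + C))) :
    {z : Z | ∀ b ∈ B, b + z ∈ A}
      = ⋂ w ∈ {w : Z →L[ℝ] ℝ | w ≠ 0 ∧ ∀ z ∈ C, 0 ≤ w z},
          {z : Z | sInf {x : EReal | ∃ t : ℝ, x = (t : EReal) ∧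
              (⨅ a ∈ A, (w a : EReal)) ≤ (⨅ b ∈ B, (w b : EReal)) + (t : EReal)}
            ≤ (w z : EReal)} :=
  stmt17_general C hCone hdual A B hA
end

section
/- Let 𝒜 ⊆ G(Z,C), z* ∈ C⁺\{0} and H⁺(z*) = {z | z*(z) ≥ 0}. Then H⁺(z*) ∸ inf 𝒜 = sup_{A∈𝒜} (H⁺(z*) ∸ A), i.e. {z | cl co ⋃ A + z ⊆ H⁺(z*)} = ⋂_{A∈𝒜} {z | A + z ⊆ H⁺(z*)}. -/
open Set
open scoped Pointwise

theorem closure_convexHull_sUnion_subset_iff {𝕜 E : Type*} [Semiring 𝕜] [PartialOrder 𝕜]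
    [AddCommMonoid E] [Module 𝕜 E] [TopologicalSpace E] {𝒜 : Set (Set E)} {K : Set E}
    (hK : Convex 𝕜 K) (hK' : IsClosed K) :
    closure (convexHull 𝕜 (⋃₀ 𝒜)) ⊆ K ↔ ∀ A ∈ 𝒜, A ⊆ K :=
  ⟨fun h _ hA =>
    ((subset_sUnion_of_mem hA).trans ((subset_convexHull 𝕜 _).trans subset_closure)).trans h,
    fun h => closure_minimal (convexHull_min (sUnion_subset h) hK) hK'⟩

theorem stmt18_general {Z : Type*} [AddCommGroup Z] [Module ℝ Z] [TopologicalSpace Z]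
    (𝒜 : Set (Set Z))
    (w : Z →L[ℝ] ℝ) :
    {z : Z | ∀ a ∈ closure (convexHull ℝ (⋃₀ 𝒜)), a + z ∈ {y : Z | 0 ≤ w y}}
      = ⋂ A ∈ 𝒜, {z : Z | ∀ a ∈ A, a + z ∈ {y : Z | 0 ≤ w y}} := by
  ext z
  have translate (S : Set Z) :
      (∀ a ∈ S, a + z ∈ {y : Z | 0 ≤ w y}) ↔ S ⊆ {a | -w z ≤ w a} :=
    forall₂_congr fun a _ => by simp [neg_le_iff_add_nonneg]
  have halfSpace_convex : Convex ℝ {a | -w z ≤ w a} := convex_halfSpace_ge w.isLinear _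
  have halfSpace_closed : IsClosed {a | -w z ≤ w a} := isClosed_le continuous_const w.continuous
  rw [mem_ofPred_eq, translate, mem_iInter₂,
    closure_convexHull_sUnion_subset_iff halfSpace_convex halfSpace_closed]
  exact forall₂_congr fun A _ => (translate A).symm

theorem stmt18 {Z : Type*} [AddCommGroup Z] [Module ℝ Z] [TopologicalSpace Z]
    [IsTopologicalAddGroup Z] [ContinuousSMul ℝ Z] [LocallyConvexSpace ℝ Z]
    (C : Set Z) (hConv : Convex ℝ C)
    (hCone : ∀ t : ℝ, 0 < t → ∀ z ∈ C, t • z ∈ C) (h0 : (0 : Z) ∈ C)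
    (𝒜 : Set (Set Z)) (h𝒜 : ∀ A ∈ 𝒜, A = closure (convexHull ℝ (A + C)))
    (w : Z →L[ℝ] ℝ) (hw : w ≠ 0) (hw' : ∀ z ∈ C, 0 ≤ w z) :
    {z : Z | ∀ a ∈ closure (convexHull ℝ (⋃₀ 𝒜)), a + z ∈ {y : Z | 0 ≤ w y}}
      = ⋂ A ∈ 𝒜, {z : Z | ∀ a ∈ A, a + z ∈ {y : Z | 0 ≤ w y}} :=
  stmt18_general 𝒜 w
end
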